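/- Let Φ be the heat kernel on ℝⁿ×ℝ, let α ∈ (0,n+2), let 0 < λ < 1, let t > 0, let x ∈ ℝⁿ, and let μ be a finite positive Borel measure supported in a ball B ⊂ ℝⁿ. Define g(y,s) = ∫_B Φ(y−z, s) dμ(z). Then ∬_{ℝⁿ×(0,t)} Φ(x−y, t−s)^{α/n} g(y,s)^λ dy ds ≤ C (√t)^{n+2−α−λn}, where C depends on n, α, λ, μ, and B but not on x or t. -/

import Mathlib

/-!
With `f(y, s) = Φ(x - y, t - s)^(α/n)`, Jensen's inequality for the probability measure
`f / ‖f‖₁` (equivalently Hölder with exponents `1/(1-λ)`, `1/λ`) gives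
`∬ f g^λ ≤ (∬ f)^(1-λ) (∬ f g)^λ`. The first factor is a Gaussian integral, of order
`t^((n+2-α)/2)`. In the second, Fubini puts the `μ`-integral outside, and completing the square
bounds `∫ Φ(x - y, t - s)^(α/n) Φ(y - z, s) dy` by `C (t - s)^((n-α)/2) t^(-n/2)` uniformly in
`z`, so `∬ f g ≤ C μ(B) t^((2-α)/2)`. Multiplying the two powers gives `√t^(n+2-α-λn)`.
-/

open Real MeasureTheory Set Metric

noncomputable def heatKernel (n : ℕ) (x : EuclideanSpace ℝ (Fin n)) (t : ℝ) : ℝ :=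
  if 0 < t then (4 * Real.pi * t) ^ (-(n : ℝ) / 2) * Real.exp (-‖x‖ ^ 2 / (4 * t)) else 0

open scoped ENNReal

section Integration

variable {X : Type*} [MeasurableSpace X] {ρ : Measure X}

lemma ofReal_integral_le_lintegral_ofReal {f : X → ℝ} (hf : ∀ x, 0 ≤ f x) :
    ENNReal.ofReal (∫ x, f x ∂ρ) ≤ ∫⁻ x, ENNReal.ofReal (f x) ∂ρ := by
  by_cases hfi : Integrable f ρ
  · rw [ofReal_integral_eq_lintegral_ofReal hfi (ae_of_all _ hf)]
  · simp [integral_undef hfi]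

lemma lintegral_mul_rpow_le {f g : X → ℝ≥0∞} (hf : AEMeasurable f ρ) (hg : AEMeasurable g ρ)
    {l : ℝ} (hl₀ : 0 ≤ l) (hl₁ : l ≤ 1) :
    ∫⁻ x, f x * g x ^ l ∂ρ ≤ (∫⁻ x, f x ∂ρ) ^ (1 - l) * (∫⁻ x, f x * g x ∂ρ) ^ l := by
  have hsplit : ∀ x, f x * g x ^ l = f x ^ (1 - l) * (f x * g x) ^ l := fun x => by
    rw [ENNReal.mul_rpow_of_nonneg _ _ hl₀, ← mul_assoc,
      ← ENNReal.rpow_add_of_nonneg _ _ (sub_nonneg.2 hl₁) hl₀, sub_add_cancel, ENNReal.rpow_one]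
  simp_rw [hsplit]
  exact ENNReal.lintegral_mul_norm_pow_le hf (hf.mul hg) (sub_nonneg.2 hl₁) hl₀ (sub_add_cancel _ _)

lemma lintegral_Ioo_sub_rpow {t p : ℝ} (ht : 0 < t) (hp : -1 < p) :
    ∫⁻ s in Ioo 0 t, ENNReal.ofReal ((t - s) ^ p) = ENNReal.ofReal (t ^ (p + 1) / (p + 1)) := by
  have hint : IntervalIntegrable (fun s => (t - s) ^ p) volume 0 t := by
    simpa using
      ((intervalIntegral.intervalIntegrable_rpow' hp (a := 0) (b := t)).comp_sub_left t).symm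
  rw [← ofReal_integral_eq_lintegral_ofReal (hint.1.mono_set Ioo_subset_Ioc_self)
    ((ae_restrict_iff' measurableSet_Ioo).2 (ae_of_all _ fun s hs =>
      rpow_nonneg (sub_nonneg.2 hs.2.le) p)),
    ← integral_Ioc_eq_integral_Ioo, ← intervalIntegral.integral_of_le ht.le,
    intervalIntegral.integral_comp_sub_left (fun u => u ^ p) t, sub_self, sub_zero,
    integral_rpow (Or.inl hp), zero_rpow (by linarith), sub_zero]

lemma setLIntegral_Ioo_le_of_le_mul_sub_rpow {f : ℝ → ℝ≥0∞} {t p K : ℝ} (ht : 0 < t)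
    (hp : -1 < p) (hK : 0 ≤ K) (hf : ∀ s ∈ Ioo 0 t, f s ≤ ENNReal.ofReal (K * (t - s) ^ p)) :
    ∫⁻ s in Ioo 0 t, f s ≤ ENNReal.ofReal (K * (t ^ (p + 1) / (p + 1))) := by
  calc ∫⁻ s in Ioo 0 t, f s ≤ ∫⁻ s in Ioo 0 t, ENNReal.ofReal K * ENNReal.ofReal ((t - s) ^ p) :=
        setLIntegral_mono' measurableSet_Ioo fun s hs => (hf s hs).trans_eq (ENNReal.ofReal_mul hK)
    _ = ENNReal.ofReal (K * (t ^ (p + 1) / (p + 1))) := by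
        rw [lintegral_const_mul' _ _ ENNReal.ofReal_ne_top, lintegral_Ioo_sub_rpow ht hp,
          ENNReal.ofReal_mul hK]

end Integration

lemma sq_norm_sub_smul_add_smul_le {V : Type*} [SeminormedAddCommGroup V] [NormedSpace ℝ V]
    {p q : ℝ} (hp : 0 ≤ p) (hq : 0 ≤ q) (hpq : p + q = 1)
    (x y z : V) : ‖y - (p • x + q • z)‖ ^ 2 ≤ p * ‖x - y‖ ^ 2 + q * ‖y - z‖ ^ 2 := by
  have hconv : ConvexOn ℝ univ fun v : V => ‖v‖ ^ 2 :=
    (convexOn_norm convex_univ).pow (fun _ _ => norm_nonneg _) 2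
  have hy : y - (p • x + q • z) = p • (y - x) + q • (y - z) := by
    obtain rfl : q = 1 - p := by linarith
    module
  rw [hy, norm_sub_rev x y]
  exact hconv.2 (mem_univ _) (mem_univ _) hp hq hpq

section Gaussian

variable {V : Type*} [NormedAddCommGroup V] [InnerProductSpace ℝ V] [FiniteDimensional ℝ V]
  [MeasurableSpace V] [BorelSpace V]

lemma lintegral_exp_neg_mul_sq_norm_sub {b : ℝ} (hb : 0 < b) (w : V) :
    ∫⁻ v, ENNReal.ofReal (rexp (-b * ‖v - w‖ ^ 2)) =
      ENNReal.ofReal ((π / b) ^ ((Module.finrank ℝ V : ℝ) / 2)) := by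
  have hint : Integrable fun v : V => rexp (-b * ‖v‖ ^ 2) :=
    .of_integral_ne_zero <| by
      rw [GaussianFourier.integral_rexp_neg_mul_sq_norm hb]; positivity
  rw [← ofReal_integral_eq_lintegral_ofReal (hint.comp_sub_right w)
      (ae_of_all _ fun v => (exp_pos _).le),
    integral_sub_right_eq_self (fun v => rexp (-b * ‖v‖ ^ 2)) w,
    GaussianFourier.integral_rexp_neg_mul_sq_norm hb]

lemma lintegral_exp_mul_exp_le {a b : ℝ} (ha : 0 < a) (hb : 0 < b) (x z : V) :
    ∫⁻ y, ENNReal.ofReal (rexp (-a * ‖x - y‖ ^ 2) * rexp (-b * ‖y - z‖ ^ 2)) ≤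
      ENNReal.ofReal ((π / (a + b)) ^ ((Module.finrank ℝ V : ℝ) / 2)) := by
  have hab : 0 < a + b := add_pos ha hb
  set w := (a / (a + b)) • x + (b / (a + b)) • z
  rw [← lintegral_exp_neg_mul_sq_norm_sub hab w]
  refine lintegral_mono fun y => ENNReal.ofReal_le_ofReal ?_
  have hsq : (a + b) * ‖y - w‖ ^ 2 ≤ a * ‖x - y‖ ^ 2 + b * ‖y - z‖ ^ 2 :=
    calc (a + b) * ‖y - w‖ ^ 2
        ≤ (a + b) * (a / (a + b) * ‖x - y‖ ^ 2 + b / (a + b) * ‖y - z‖ ^ 2) := by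
          gcongr
          exact sq_norm_sub_smul_add_smul_le (by positivity) (by positivity) (by field_simp) x y z
      _ = a * ‖x - y‖ ^ 2 + b * ‖y - z‖ ^ 2 := by field_simp
  rw [← exp_add, exp_le_exp]
  linarith

end Gaussian

lemma mul_rpow_mul_mul_rpow {c d τ : ℝ} (hc : 0 ≤ c) (hd : 0 ≤ d) (hτ : 0 < τ) (u v : ℝ) :
    (c * τ) ^ u * (d * τ) ^ v = c ^ u * d ^ v * τ ^ (u + v) := by
  rw [mul_rpow hc hτ.le, mul_rpow hd hτ.le, rpow_add hτ]
  ring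

lemma rpow_mul_rpow_div_add_le {n α s t : ℝ} (hn : 0 < n) (hα : 0 < α) (hs : 0 < s)
    (hst : s < t) :
    (4 * π * (t - s)) ^ (-α / 2) * (n * (t - s) / (α * s + n * (t - s))) ^ (n / 2) ≤
      (4 * π) ^ (-α / 2) * (n / min α n) ^ (n / 2) * t ^ (-n / 2) * (t - s) ^ ((n - α) / 2) := by
  have ht : 0 < t := hs.trans hst
  have hτ : 0 < t - s := sub_pos.2 hst
  have hm : 0 < min α n := lt_min hα hn
  have hmt : min α n * t ≤ α * s + n * (t - s) := by
    nlinarith [min_le_left α n, min_le_right α n]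
  calc (4 * π * (t - s)) ^ (-α / 2) * (n * (t - s) / (α * s + n * (t - s))) ^ (n / 2)
      ≤ (4 * π * (t - s)) ^ (-α / 2) * (n / min α n * t⁻¹ * (t - s)) ^ (n / 2) := by
        gcongr
        calc n * (t - s) / (α * s + n * (t - s)) ≤ n * (t - s) / (min α n * t) := by
              gcongr
          _ = n / min α n * t⁻¹ * (t - s) := by field_simp
    _ = _ := by
        rw [mul_rpow_mul_mul_rpow (by positivity) (by positivity) hτ,
          mul_rpow (div_nonneg hn.le hm.le) (inv_nonneg.2 ht.le), inv_rpow ht.le,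
          ← rpow_neg ht.le]
        ring_nf

section HeatKernel

variable {n : ℕ}

lemma heatKernel_nonneg (x : EuclideanSpace ℝ (Fin n)) (t : ℝ) : 0 ≤ heatKernel n x t := by
  unfold heatKernel
  split_ifs <;> positivity

@[fun_prop]
lemma Measurable.heatKernel {X : Type*} [MeasurableSpace X] {f : X → EuclideanSpace ℝ (Fin n)}
    {g : X → ℝ} (hf : Measurable f) (hg : Measurable g) :
    Measurable fun a => _root_.heatKernel n (f a) (g a) := by
  unfold _root_.heatKernel
  exact Measurable.ite (measurableSet_lt measurable_const hg) (by fun_prop) measurable_const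

lemma heatKernel_of_pos (x : EuclideanSpace ℝ (Fin n)) {τ : ℝ} (hτ : 0 < τ) :
    heatKernel n x τ = (4 * π * τ) ^ (-(n : ℝ) / 2) * rexp (-(1 / (4 * τ)) * ‖x‖ ^ 2) := by
  rw [heatKernel, if_pos hτ]
  ring_nf

lemma heatKernel_rpow_of_pos (hn : n ≠ 0) (α : ℝ) (x : EuclideanSpace ℝ (Fin n)) {τ : ℝ}
    (hτ : 0 < τ) :
    heatKernel n x τ ^ (α / n) =
      (4 * π * τ) ^ (-α / 2) * rexp (-(α / (4 * n * τ)) * ‖x‖ ^ 2) := by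
  have h4πτ : 0 < 4 * π * τ := by positivity
  rw [heatKernel_of_pos x hτ, mul_rpow (rpow_nonneg h4πτ.le _) (exp_pos _).le,
    ← rpow_mul h4πτ.le, ← exp_mul]
  congr 2 <;> field_simp

lemma lintegral_heatKernel_rpow (hn : n ≠ 0) {α : ℝ} (hα : 0 < α) (x : EuclideanSpace ℝ (Fin n))
    {τ : ℝ} (hτ : 0 < τ) :
    ∫⁻ y, ENNReal.ofReal (heatKernel n (x - y) τ ^ (α / n)) =
      ENNReal.ofReal ((4 * π) ^ (-α / 2) * (4 * n * π / α) ^ ((n : ℝ) / 2) *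
        τ ^ (((n : ℝ) - α) / 2)) := by
  have hb : 0 < α / (4 * n * τ) := by positivity
  have h4πτ : 0 ≤ 4 * π * τ := by positivity
  simp_rw [heatKernel_rpow_of_pos hn α _ hτ, ENNReal.ofReal_mul (rpow_nonneg h4πτ _),
    norm_sub_rev x]
  rw [lintegral_const_mul' _ _ ENNReal.ofReal_ne_top, lintegral_exp_neg_mul_sq_norm_sub hb x,
    finrank_euclideanSpace_fin, ← ENNReal.ofReal_mul (by positivity),
    show π / (α / (4 * n * τ)) = 4 * n * π / α * τ by field_simp,
    mul_rpow_mul_mul_rpow (by positivity) (by positivity) hτ]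
  ring_nf

lemma lintegral_heatKernel_rpow_mul_heatKernel_le (hn : n ≠ 0) {α : ℝ} (hα : 0 < α)
    (x z : EuclideanSpace ℝ (Fin n)) {τ s : ℝ} (hτ : 0 < τ) (hs : 0 < s) :
    ∫⁻ y, ENNReal.ofReal (heatKernel n (x - y) τ ^ (α / n) * heatKernel n (y - z) s) ≤
      ENNReal.ofReal ((4 * π * τ) ^ (-α / 2) * (n * τ / (α * s + n * τ)) ^ ((n : ℝ) / 2)) := by
  have h4πs : 0 ≤ 4 * π * s := by positivity
  simp_rw [heatKernel_rpow_of_pos hn α _ hτ, heatKernel_of_pos _ hs,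
    mul_mul_mul_comm ((4 * π * τ) ^ (-α / 2)),
    ENNReal.ofReal_mul (mul_nonneg (rpow_nonneg (by positivity : 0 ≤ 4 * π * τ) (-α / 2))
      (rpow_nonneg h4πs (-(n : ℝ) / 2)))]
  rw [lintegral_const_mul' _ _ ENNReal.ofReal_ne_top]
  grw [lintegral_exp_mul_exp_le (by positivity) (by positivity) x z,
    ← ENNReal.ofReal_mul (by positivity), finrank_euclideanSpace_fin]
  refine ENNReal.ofReal_le_ofReal (le_of_eq ?_)
  rw [mul_assoc, neg_div 2 (n : ℝ), rpow_neg h4πs, ← inv_rpow h4πs,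
    ← mul_rpow (inv_nonneg.2 h4πs) (by positivity)]
  congr 2
  field_simp

end HeatKernel

section Potential

variable {n : ℕ}

/-- The `g` of the statement, for `ν = μ` restricted to the ball, as an `ℝ≥0∞`-valued integral. -/
noncomputable def heatPotential (ν : Measure (EuclideanSpace ℝ (Fin n)))
    (y : EuclideanSpace ℝ (Fin n)) (s : ℝ) : ℝ≥0∞ :=
  ∫⁻ z, ENNReal.ofReal (heatKernel n (y - z) s) ∂ν

lemma measurable_heatPotential (ν : Measure (EuclideanSpace ℝ (Fin n))) [SFinite ν] :
    Measurable fun p : ℝ × EuclideanSpace ℝ (Fin n) => heatPotential ν p.2 p.1 := by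
  refine Measurable.lintegral_prod_right (f := fun (p : ℝ × EuclideanSpace ℝ (Fin n)) z =>
    ENNReal.ofReal (heatKernel n (p.2 - z) p.1)) ?_
  fun_prop

lemma ofReal_integral_heatKernel_le_heatPotential (ν : Measure (EuclideanSpace ℝ (Fin n)))
    (y : EuclideanSpace ℝ (Fin n)) (s : ℝ) :
    ENNReal.ofReal (∫ z, heatKernel n (y - z) s ∂ν) ≤ heatPotential ν y s :=
  ofReal_integral_le_lintegral_ofReal fun _ => heatKernel_nonneg _ _

lemma lintegral_heatKernel_rpow_mul_heatPotential_le (hn : n ≠ 0) {α : ℝ} (hα : 0 < α)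
    (ν : Measure (EuclideanSpace ℝ (Fin n))) [IsFiniteMeasure ν] (x : EuclideanSpace ℝ (Fin n))
    {s t : ℝ} (hs : 0 < s) (hst : s < t) :
    ∫⁻ y, ENNReal.ofReal (heatKernel n (x - y) (t - s) ^ (α / n)) * heatPotential ν y s ≤
      ENNReal.ofReal ((4 * π) ^ (-α / 2) * (n / min α n) ^ ((n : ℝ) / 2) * t ^ (-(n : ℝ) / 2) *
        ν.real univ * (t - s) ^ (((n : ℝ) - α) / 2)) := by
  set K := (4 * π) ^ (-α / 2) * (n / min α n) ^ ((n : ℝ) / 2) * t ^ (-(n : ℝ) / 2) *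
    (t - s) ^ (((n : ℝ) - α) / 2)
  have hn' : (0 : ℝ) < n := Nat.cast_pos.2 (Nat.pos_of_ne_zero hn)
  have hK : 0 ≤ K := by
    have hm : 0 < min α n := lt_min hα hn'
    have ht : 0 < t := hs.trans hst
    have hτ : 0 < t - s := sub_pos.2 hst
    positivity
  calc ∫⁻ y, ENNReal.ofReal (heatKernel n (x - y) (t - s) ^ (α / n)) * heatPotential ν y s
      = ∫⁻ z, (∫⁻ y, ENNReal.ofReal (heatKernel n (x - y) (t - s) ^ (α / n) *
          heatKernel n (y - z) s)) ∂ν := by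
        simp_rw [heatPotential, ← lintegral_const_mul' _ _ ENNReal.ofReal_ne_top,
          ← ENNReal.ofReal_mul (rpow_nonneg (heatKernel_nonneg _ _) _)]
        exact lintegral_lintegral_swap (by fun_prop)
    _ ≤ ∫⁻ _, ENNReal.ofReal K ∂ν := lintegral_mono fun z =>
        (lintegral_heatKernel_rpow_mul_heatKernel_le hn hα x z (sub_pos.2 hst) hs).trans
          (ENNReal.ofReal_le_ofReal (rpow_mul_rpow_div_add_le hn' hα hs hst))
    _ = _ := by
        rw [lintegral_const, ← ofReal_measureReal, ← ENNReal.ofReal_mul hK]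
        congr 1
        ring

end Potential

section SpaceTime

variable {n : ℕ}

lemma setLIntegral_lintegral_heatKernel_rpow_le (hn : n ≠ 0) {α : ℝ} (hα : 0 < α)
    (hα' : α < n + 2) (x : EuclideanSpace ℝ (Fin n)) {t : ℝ} (ht : 0 < t) :
    ∫⁻ s in Ioo 0 t, ∫⁻ y, ENNReal.ofReal (heatKernel n (x - y) (t - s) ^ (α / n)) ≤
      ENNReal.ofReal ((4 * π) ^ (-α / 2) * (4 * n * π / α) ^ ((n : ℝ) / 2) /
        (((n : ℝ) + 2 - α) / 2) * t ^ (((n : ℝ) + 2 - α) / 2)) := by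
  have hp : -1 < ((n : ℝ) - α) / 2 := by linarith
  refine (setLIntegral_Ioo_le_of_le_mul_sub_rpow ht hp (by positivity) fun s hs =>
    (lintegral_heatKernel_rpow hn hα x (sub_pos.2 hs.2)).le).trans_eq ?_
  rw [show ((n : ℝ) - α) / 2 + 1 = ((n : ℝ) + 2 - α) / 2 by ring]
  congr 1
  ring

lemma setLIntegral_lintegral_heatKernel_rpow_mul_heatPotential_le (hn : n ≠ 0) {α : ℝ}
    (hα : 0 < α) (hα' : α < n + 2) (ν : Measure (EuclideanSpace ℝ (Fin n))) [IsFiniteMeasure ν]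
    (x : EuclideanSpace ℝ (Fin n)) {t : ℝ} (ht : 0 < t) :
    ∫⁻ s in Ioo 0 t, ∫⁻ y, ENNReal.ofReal (heatKernel n (x - y) (t - s) ^ (α / n)) *
        heatPotential ν y s ≤
      ENNReal.ofReal ((4 * π) ^ (-α / 2) * (n / min α n) ^ ((n : ℝ) / 2) * ν.real univ /
        (((n : ℝ) + 2 - α) / 2) * t ^ ((2 - α) / 2)) := by
  have hn' : (0 : ℝ) < n := Nat.cast_pos.2 (Nat.pos_of_ne_zero hn)
  have hm : 0 < min α n := lt_min hα hn'
  have hp : -1 < ((n : ℝ) - α) / 2 := by linarith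
  refine (setLIntegral_Ioo_le_of_le_mul_sub_rpow ht hp (by positivity) fun s hs =>
    lintegral_heatKernel_rpow_mul_heatPotential_le hn hα ν x hs.1 hs.2).trans_eq ?_
  rw [show ((n : ℝ) - α) / 2 + 1 = ((n : ℝ) + 2 - α) / 2 by ring,
    show (2 - α) / 2 = -(n : ℝ) / 2 + ((n : ℝ) + 2 - α) / 2 by ring, rpow_add ht]
  congr 1
  ring

lemma exists_lintegral_heatKernel_rpow_mul_heatPotential_rpow_le (hn : n ≠ 0) {α l : ℝ}
    (hα : 0 < α) (hα' : α < n + 2) (hl₀ : 0 ≤ l) (hl₁ : l ≤ 1)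
    (ν : Measure (EuclideanSpace ℝ (Fin n))) [IsFiniteMeasure ν] :
    ∃ C, 0 ≤ C ∧ ∀ (x : EuclideanSpace ℝ (Fin n)) (t : ℝ), 0 < t →
      ∫⁻ s in Ioo 0 t, ∫⁻ y, ENNReal.ofReal (heatKernel n (x - y) (t - s) ^ (α / n)) *
          heatPotential ν y s ^ l ≤
        ENNReal.ofReal (C * t ^ (((n : ℝ) + 2 - α - l * n) / 2)) := by
  have hn' : (0 : ℝ) < n := Nat.cast_pos.2 (Nat.pos_of_ne_zero hn)
  have hm : 0 < min α n := lt_min hα hn'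
  have hq : 0 < ((n : ℝ) + 2 - α) / 2 := by linarith
  set A := (4 * π) ^ (-α / 2) * (4 * n * π / α) ^ ((n : ℝ) / 2) / (((n : ℝ) + 2 - α) / 2)
  set B := (4 * π) ^ (-α / 2) * (n / min α n) ^ ((n : ℝ) / 2) * ν.real univ /
    (((n : ℝ) + 2 - α) / 2)
  refine ⟨A ^ (1 - l) * B ^ l, by positivity, fun x t ht => ?_⟩
  set F : ℝ × EuclideanSpace ℝ (Fin n) → ℝ≥0∞ :=
    fun z => ENNReal.ofReal (heatKernel n (x - z.2) (t - z.1) ^ (α / n))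
  set G : ℝ × EuclideanSpace ℝ (Fin n) → ℝ≥0∞ := fun z => heatPotential ν z.2 z.1
  have hF : Measurable F := by fun_prop
  have hG : Measurable G := measurable_heatPotential ν
  set ρ := (volume.restrict (Ioo 0 t)).prod (volume : Measure (EuclideanSpace ℝ (Fin n)))
  calc ∫⁻ s in Ioo 0 t, ∫⁻ y, ENNReal.ofReal (heatKernel n (x - y) (t - s) ^ (α / n)) *
          heatPotential ν y s ^ l
      = ∫⁻ z, F z * G z ^ l ∂ρ := (lintegral_prod _ (hF.mul (hG.pow_const l)).aemeasurable).symm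
    _ ≤ (∫⁻ z, F z ∂ρ) ^ (1 - l) * (∫⁻ z, F z * G z ∂ρ) ^ l :=
        lintegral_mul_rpow_le hF.aemeasurable hG.aemeasurable hl₀ hl₁
    _ ≤ ENNReal.ofReal (A * t ^ (((n : ℝ) + 2 - α) / 2)) ^ (1 - l) *
          ENNReal.ofReal (B * t ^ ((2 - α) / 2)) ^ l := by
        rw [lintegral_prod _ hF.aemeasurable,
          lintegral_prod (fun z => F z * G z) (hF.mul hG).aemeasurable]
        gcongr
        · exact setLIntegral_lintegral_heatKernel_rpow_le hn hα hα' x ht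
        · exact setLIntegral_lintegral_heatKernel_rpow_mul_heatPotential_le hn hα hα' ν x ht
    _ = ENNReal.ofReal (A ^ (1 - l) * B ^ l * t ^ (((n : ℝ) + 2 - α - l * n) / 2)) := by
        rw [ENNReal.ofReal_rpow_of_nonneg (by positivity) (by linarith),
          ENNReal.ofReal_rpow_of_nonneg (by positivity) hl₀, ← ENNReal.ofReal_mul (by positivity),
          mul_rpow (by positivity) (by positivity), mul_rpow (by positivity) (by positivity),
          ← rpow_mul ht.le, ← rpow_mul ht.le, mul_mul_mul_comm, ← rpow_add ht]
        congr 3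
        ring

lemma ofReal_integral_le_lintegral_heatPotential {α l : ℝ} (hl : 0 ≤ l)
    (ν : Measure (EuclideanSpace ℝ (Fin n))) (x : EuclideanSpace ℝ (Fin n)) (t : ℝ) :
    ENNReal.ofReal (∫ s in Ioo 0 t, ∫ y, heatKernel n (x - y) (t - s) ^ (α / n) *
        (∫ z, heatKernel n (y - z) s ∂ν) ^ l) ≤
      ∫⁻ s in Ioo 0 t, ∫⁻ y, ENNReal.ofReal (heatKernel n (x - y) (t - s) ^ (α / n)) *
        heatPotential ν y s ^ l := by
  have hg : ∀ s y, 0 ≤ ∫ z, heatKernel n (y - z) s ∂ν := fun s y =>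
    integral_nonneg fun _ => heatKernel_nonneg _ _
  have hnn : ∀ s y, 0 ≤ heatKernel n (x - y) (t - s) ^ (α / n) *
      (∫ z, heatKernel n (y - z) s ∂ν) ^ l := fun s y =>
    mul_nonneg (rpow_nonneg (heatKernel_nonneg _ _) _) (rpow_nonneg (hg s y) _)
  refine (ofReal_integral_le_lintegral_ofReal fun s => integral_nonneg (hnn s)).trans ?_
  gcongr with s
  refine (ofReal_integral_le_lintegral_ofReal (hnn s)).trans ?_
  gcongr with y
  rw [ENNReal.ofReal_mul (rpow_nonneg (heatKernel_nonneg _ _) _),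
    ← ENNReal.ofReal_rpow_of_nonneg (hg s y) hl]
  gcongr
  exact ofReal_integral_heatKernel_le_heatPotential ν y s

end SpaceTime

theorem heatKernel_pow_measure_potential_general (n : ℕ) (hn : 1 ≤ n) (α l : ℝ)
    (hα : α ∈ Set.Ioo 0 ((n : ℝ) + 2)) (hl : l ∈ Set.Ioo (0 : ℝ) 1)
    (μ : Measure (EuclideanSpace ℝ (Fin n))) [IsFiniteMeasure μ]
    (c : EuclideanSpace ℝ (Fin n)) (R : ℝ) :
    ∃ C > 0, ∀ (x : EuclideanSpace ℝ (Fin n)) (t : ℝ), 0 < t →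
      (∫ s in Set.Ioo (0 : ℝ) t, ∫ y : EuclideanSpace ℝ (Fin n),
          heatKernel n (x - y) (t - s) ^ (α / (n : ℝ)) *
            (∫ z in Metric.ball c R, heatKernel n (y - z) s ∂μ) ^ l) ≤
        C * Real.sqrt t ^ ((n : ℝ) + 2 - α - l * n) := by
  obtain ⟨C, hC₀, hC⟩ := exists_lintegral_heatKernel_rpow_mul_heatPotential_rpow_le
    (Nat.one_le_iff_ne_zero.1 hn) hα.1 hα.2 hl.1.le hl.2.le (μ.restrict (ball c R))
  refine ⟨C + 1, by positivity, fun x t ht => ?_⟩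
  rw [sqrt_eq_rpow, ← rpow_mul ht.le, one_div_mul_eq_div,
    ← ENNReal.ofReal_le_ofReal_iff (by positivity)]
  calc _ ≤ _ := ofReal_integral_le_lintegral_heatPotential hl.1.le _ x t
    _ ≤ _ := hC x t ht
    _ ≤ _ := by gcongr; linarith

theorem heatKernel_pow_measure_potential (n : ℕ) (hn : 1 ≤ n) (α l : ℝ)
    (hα : α ∈ Set.Ioo 0 ((n : ℝ) + 2)) (hl : l ∈ Set.Ioo (0 : ℝ) 1)
    (μ : Measure (EuclideanSpace ℝ (Fin n))) [IsFiniteMeasure μ]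
    (c : EuclideanSpace ℝ (Fin n)) (R : ℝ) (hR : 0 < R)
    (hsupp : μ (Metric.ball c R)ᶜ = 0) :
    ∃ C > 0, ∀ (x : EuclideanSpace ℝ (Fin n)) (t : ℝ), 0 < t →
      (∫ s in Set.Ioo (0 : ℝ) t, ∫ y : EuclideanSpace ℝ (Fin n),
          heatKernel n (x - y) (t - s) ^ (α / (n : ℝ)) *
            (∫ z in Metric.ball c R, heatKernel n (y - z) s ∂μ) ^ l) ≤
        C * Real.sqrt t ^ ((n : ℝ) + 2 - α - l * n) :=
  heatKernel_pow_measure_potential_general n hn α l hα hl μ c R
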